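/- arXiv:1703.02252 — 8 statements merged into one kernel-verified Lean document; each statement's English description precedes it below -/
import Mathlib

section
/- Let n ≥ 1, let σ : Fin n → Fin n → ℝ be a conductivity matrix whose support graph is connected, and let B ⊆ Fin n be nonempty. If v : Fin n → ℝ satisfies ∑_j σ_{ij}·(v_i − v_j) = 0 for every i ∉ B and v_i = 0 for every i ∈ B, then v = 0. (Equivalently, the Dirichlet forward problem has at most one solution, i.e., the matrix A_D is non-singular.) -/
/-!
By the discrete Green identity, the Dirichlet energy `∑ i, ∑ j, σ i j * (v i - v j) ^ 2` is
twice `∑ i, v i * ∑ j, σ i j * (v i - v j)`. For a solution of the Dirichlet problem every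
summand of the latter vanishes (the first factor on `B`, the Kirchhoff sum off `B`), so the
energy is zero; as its terms are nonnegative, `v` is constant across every edge
of the support graph, hence constant by connectedness, and it vanishes at a boundary vertex.
-/

open Finset

section DirichletEnergy

variable {ι : Type*} [Fintype ι] {σ : ι → ι → ℝ}

theorem sum_sum_mul_sub_sq_eq_two_mul_sum (hσ : ∀ i j, σ i j = σ j i) (v : ι → ℝ) :
    ∑ i, ∑ j, σ i j * (v i - v j) ^ 2 = 2 * ∑ i, v i * ∑ j, σ i j * (v i - v j) := by
  have hswap : ∑ i, ∑ j, σ i j * (v j - v i) * v j = ∑ i, ∑ j, σ i j * (v i - v j) * v i := by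
    rw [Finset.sum_comm]
    simp_rw [hσ]
  calc ∑ i, ∑ j, σ i j * (v i - v j) ^ 2
      = ∑ i, ∑ j, (σ i j * (v i - v j) * v i + σ i j * (v j - v i) * v j) := by
        simp_rw [sub_sq']
        congr! 2 with i - j -
        ring
    _ = 2 * ∑ i, ∑ j, σ i j * (v i - v j) * v i := by
        simp_rw [Finset.sum_add_distrib, hswap]
        ring
    _ = 2 * ∑ i, v i * ∑ j, σ i j * (v i - v j) := by
        simp_rw [Finset.mul_sum, mul_comm (v _)]

theorem eq_of_sum_sum_mul_sub_sq_eq_zero (hσ : ∀ i j, 0 ≤ σ i j) {v : ι → ℝ}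
    (h : ∑ i, ∑ j, σ i j * (v i - v j) ^ 2 = 0) {i j : ι} (hij : 0 < σ i j) : v i = v j := by
  have hterm : σ i j * (v i - v j) ^ 2 = 0 := by
    have hnonneg : ∀ i j, 0 ≤ σ i j * (v i - v j) ^ 2 := fun i j =>
      mul_nonneg (hσ i j) (sq_nonneg _)
    rw [Finset.sum_eq_zero_iff_of_nonneg fun i _ => Finset.sum_nonneg fun j _ => hnonneg i j]
      at h
    exact (Finset.sum_eq_zero_iff_of_nonneg fun j _ => hnonneg i j).mp (h i (mem_univ _)) j
      (mem_univ _)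
  rw [mul_eq_zero, or_iff_right hij.ne', sq_eq_zero_iff, sub_eq_zero] at hterm
  exact hterm

end DirichletEnergy

theorem SimpleGraph.Reachable.eq_of_forall_adj {V β : Type*} {G : SimpleGraph V} {f : V → β}
    (hf : ∀ a b, G.Adj a b → f a = f b) {a b : V} (h : G.Reachable a b) : f a = f b := by
  rw [SimpleGraph.reachable_iff_reflTransGen] at h
  simpa [Relation.reflTransGen_eq_self] using h.lift f hf

theorem dirichlet_forward_uniqueness_general
    (n : ℕ) (σ : Fin n → Fin n → ℝ)
    (hσsymm : ∀ i j, σ i j = σ j i) (hσnonneg : ∀ i j, 0 ≤ σ i j)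
    (hconn : (SimpleGraph.fromRel (fun i j => 0 < σ i j)).Connected)
    (B : Set (Fin n)) (hB : B.Nonempty) (v : Fin n → ℝ)
    (hK : ∀ i, i ∉ B → ∑ j, σ i j * (v i - v j) = 0)
    (hv0 : ∀ i ∈ B, v i = 0) :
    ∀ i, v i = 0 := by
  have henergy : ∑ i, ∑ j, σ i j * (v i - v j) ^ 2 = 0 := by
    rw [sum_sum_mul_sub_sq_eq_two_mul_sum hσsymm, mul_eq_zero, or_iff_right two_ne_zero]
    refine Finset.sum_eq_zero fun i _ => ?_
    by_cases hi : i ∈ B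
    · rw [hv0 i hi, zero_mul]
    · rw [hK i hi, mul_zero]
  have hedge : ∀ i j, (SimpleGraph.fromRel fun i j => 0 < σ i j).Adj i j → v i = v j := by
    rintro i j ⟨-, hij | hji⟩
    · exact eq_of_sum_sum_mul_sub_sq_eq_zero hσnonneg henergy hij
    · exact (eq_of_sum_sum_mul_sub_sq_eq_zero hσnonneg henergy hji).symm
  obtain ⟨b, hb⟩ := hB
  intro i
  rw [(hconn.preconnected i b).eq_of_forall_adj hedge, hv0 b hb]

/-- Uniqueness for the Dirichlet forward problem: a solution of the Kirchhoff
equations vanishing on a nonempty boundary set vanishes everywhere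
(i.e. the matrix `A_D` is non-singular). -/
theorem dirichlet_forward_uniqueness
    (n : ℕ) (hn : 1 ≤ n) (σ : Fin n → Fin n → ℝ)
    (hσsymm : ∀ i j, σ i j = σ j i) (hσnonneg : ∀ i j, 0 ≤ σ i j)
    (hσdiag : ∀ i, σ i i = 0)
    (hconn : (SimpleGraph.fromRel (fun i j => 0 < σ i j)).Connected)
    (B : Set (Fin n)) (hB : B.Nonempty) (v : Fin n → ℝ)
    (hK : ∀ i, i ∉ B → ∑ j, σ i j * (v i - v j) = 0)
    (hv0 : ∀ i ∈ B, v i = 0) :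
    ∀ i, v i = 0 :=
  dirichlet_forward_uniqueness_general n σ hσsymm hσnonneg hconn B hB v hK hv0
end

section
/- Let n ≥ 1, let a : Fin n → Fin n → ℝ be a measurement matrix, let u_f : Fin n → ℝ, and let b : Fin n → Fin n → ℝ satisfy |b_{ij}| ≤ a_{ij}/2 for all i,j. Then −∑_{i,j} b_{ij}·((u_f)_i − (u_f)_j) is the least upper bound of the set { ∑_{i,j} d_{ij}·b_{ij} − (1/2)·∑_{i,j} a_{ij}·|d_{ij} + (u_f)_i − (u_f)_j| : d : Fin n → Fin n → ℝ }. (Convex conjugate of F, bounded case.) -/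
/-- Convex conjugate of `F`, bounded case: if `|b_{ij}| ≤ a_{ij}/2` for all `i,j`,
then `-∑_{i,j} b_{ij}((u_f)_i - (u_f)_j)` is the least upper bound of
`{ ⟨d,b⟩ - (1/2)⟨a,|d + Du_f|⟩ : d }`. -/
theorem convex_conjugate_F_bounded
    (n : ℕ) (hn : 1 ≤ n) (a : Fin n → Fin n → ℝ)
    (hasymm : ∀ i j, a i j = a j i) (hanonneg : ∀ i j, 0 ≤ a i j)
    (hadiag : ∀ i, a i i = 0)
    (uf : Fin n → ℝ) (b : Fin n → Fin n → ℝ)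
    (hb : ∀ i j, |b i j| ≤ a i j / 2) :
    IsLUB
      (Set.range (fun d : Fin n → Fin n → ℝ =>
        (∑ i, ∑ j, d i j * b i j) -
          (1 / 2) * ∑ i, ∑ j, a i j * |d i j + (uf i - uf j)|))
      (-(∑ i, ∑ j, b i j * (uf i - uf j))) := by
  constructor
  · rintro x ⟨d, rfl⟩
    have key : ∀ i j : Fin n,
        d i j * b i j - (1 / 2) * (a i j * |d i j + (uf i - uf j)|)
          ≤ -(b i j * (uf i - uf j)) := by
      intro i j
      have h1 := hb i j
      have h2 : b i j * (d i j + (uf i - uf j)) ≤ |b i j| * |d i j + (uf i - uf j)| := by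
        calc b i j * (d i j + (uf i - uf j)) ≤ |b i j * (d i j + (uf i - uf j))| := le_abs_self _
          _ = |b i j| * |d i j + (uf i - uf j)| := abs_mul _ _
      have h3 : (0:ℝ) ≤ |d i j + (uf i - uf j)| := abs_nonneg _
      nlinarith
    calc (∑ i, ∑ j, d i j * b i j) -
          (1 / 2) * ∑ i, ∑ j, a i j * |d i j + (uf i - uf j)|
        = ∑ i, ∑ j, (d i j * b i j - (1 / 2) * (a i j * |d i j + (uf i - uf j)|)) := by
          rw [Finset.mul_sum]
          rw [← Finset.sum_sub_distrib]
          congr 1; ext i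
          rw [Finset.mul_sum, ← Finset.sum_sub_distrib]
      _ ≤ ∑ i, ∑ j, -(b i j * (uf i - uf j)) := by
          apply Finset.sum_le_sum; intro i _
          exact Finset.sum_le_sum fun j _ => key i j
      _ = -(∑ i, ∑ j, b i j * (uf i - uf j)) := by
          simp [Finset.sum_neg_distrib]
  · intro c hc
    have : (-(∑ i, ∑ j, b i j * (uf i - uf j))) ∈
        Set.range (fun d : Fin n → Fin n → ℝ =>
          (∑ i, ∑ j, d i j * b i j) -
            (1 / 2) * ∑ i, ∑ j, a i j * |d i j + (uf i - uf j)|) := by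
      refine ⟨fun i j => uf j - uf i, ?_⟩
      simp only []
      have h1 : ∀ i j : Fin n, (uf j - uf i) + (uf i - uf j) = 0 := by intro i j; ring
      have h2 : (∑ i, ∑ j, a i j * |(uf j - uf i) + (uf i - uf j)|) = 0 := by
        apply Finset.sum_eq_zero; intro i _
        apply Finset.sum_eq_zero; intro j _
        rw [h1]; simp
      rw [h2]
      have : ∀ i j : Fin n, (uf j - uf i) * b i j = -(b i j * (uf i - uf j)) := by
        intro i j; ring
      simp only [this, Finset.sum_neg_distrib]
      ring
    exact hc this
end

section
/- Let n ≥ 1, let a : Fin n → Fin n → ℝ be a measurement matrix, let u_f : Fin n → ℝ, and let b : Fin n → Fin n → ℝ. If there exist indices i₀, j₀ with |b_{i₀j₀}| > a_{i₀j₀}/2, then the quantity ∑_{i,j} d_{ij}·b_{ij} − (1/2)·∑_{i,j} a_{ij}·|d_{ij} + (u_f)_i − (u_f)_j| is unbounded above as d ranges over all matrices d : Fin n → Fin n → ℝ; that is, for every M ∈ ℝ there exists d with ∑_{i,j} d_{ij}·b_{ij} − (1/2)·∑_{i,j} a_{ij}·|d_{ij} + (u_f)_i − (u_f)_j| > M.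 (Convex conjugate of F, unbounded case.) -/
/-- Convex conjugate of `F`, unbounded case: if `|b_{i₀j₀}| > a_{i₀j₀}/2` for some
indices `i₀, j₀`, then `⟨d,b⟩ - (1/2)⟨a,|d + Du_f|⟩` is unbounded above in `d`. -/
theorem convex_conjugate_F_unbounded
    (n : ℕ) (hn : 1 ≤ n) (a : Fin n → Fin n → ℝ)
    (hasymm : ∀ i j, a i j = a j i) (hanonneg : ∀ i j, 0 ≤ a i j)
    (hadiag : ∀ i, a i i = 0)
    (uf : Fin n → ℝ) (b : Fin n → Fin n → ℝ)
    (i₀ j₀ : Fin n) (hb : a i₀ j₀ / 2 < |b i₀ j₀|) :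
    ∀ M : ℝ, ∃ d : Fin n → Fin n → ℝ,
      M < (∑ i, ∑ j, d i j * b i j) -
            (1 / 2) * ∑ i, ∑ j, a i j * |d i j + (uf i - uf j)| := by
  intro M
  set β := |b i₀ j₀| with hβdef
  set a₀ := a i₀ j₀ with ha₀
  have hpos : 0 < β - a₀ / 2 := by linarith
  set s : ℝ := if 0 ≤ b i₀ j₀ then 1 else -1 with hs
  have hsb : s * b i₀ j₀ = β := by
    rcases le_or_gt 0 (b i₀ j₀) with h | h
    · simp [hs, h, hβdef, abs_of_nonneg h]
    · simp [hs, not_le.2 h, hβdef, abs_of_neg h]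
  have hsabs : |s| = 1 := by
    rw [hs]; split_ifs <;> simp
  set A := ∑ i, ∑ j, a i j * |uf i - uf j| with hA
  set t := max 1 ((M + A / 2 + 1) / (β - a₀ / 2)) with ht
  have ht0 : (0 : ℝ) ≤ t := le_trans zero_le_one (le_max_left _ _)
  have htM : M + A / 2 < t * (β - a₀ / 2) := by
    have h1 := le_max_right 1 ((M + A / 2 + 1) / (β - a₀ / 2))
    have h2 := (div_le_iff₀ hpos).mp h1
    nlinarith
  refine ⟨fun i j => if i = i₀ then (if j = j₀ then t * s else 0) else 0, ?_⟩
  have h1 : (∑ i, ∑ j, (if i = i₀ then (if j = j₀ then t * s else 0) else 0) * b i j)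
      = t * β := by
    rw [show t * β = t * (s * b i₀ j₀) by rw [hsb], Finset.sum_eq_single i₀]
    · rw [Finset.sum_eq_single j₀]
      · simp [mul_assoc]
      · intro j _ hj; simp [hj]
      · intro h; exact absurd (Finset.mem_univ j₀) h
    · intro i _ hi; simp [hi]
    · intro h; exact absurd (Finset.mem_univ i₀) h
  have hextra : (∑ i, ∑ j, (if i = i₀ then (if j = j₀ then a₀ * t else 0) else 0) : ℝ)
      = a₀ * t := by
    rw [Finset.sum_eq_single i₀]
    · rw [Finset.sum_eq_single j₀]
      · simp
      · intro j _ hj; simp [hj]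
      · intro h; exact absurd (Finset.mem_univ j₀) h
    · intro i _ hi; simp [hi]
    · intro h; exact absurd (Finset.mem_univ i₀) h
  have h2 : (∑ i, ∑ j, a i j *
        |(if i = i₀ then (if j = j₀ then t * s else 0) else 0) + (uf i - uf j)|)
      ≤ A + a₀ * t := by
    calc (∑ i, ∑ j, a i j *
          |(if i = i₀ then (if j = j₀ then t * s else 0) else 0) + (uf i - uf j)|)
        ≤ ∑ i, ∑ j, (a i j * |uf i - uf j|
            + (if i = i₀ then (if j = j₀ then a₀ * t else 0) else 0)) := by
          refine Finset.sum_le_sum fun i _ => Finset.sum_le_sum fun j _ => ?_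
          split_ifs with hi hj
          · rw [hi, hj]
            have habs : |t * s + (uf i₀ - uf j₀)| ≤ t + |uf i₀ - uf j₀| := by
              calc |t * s + (uf i₀ - uf j₀)| ≤ |t * s| + |uf i₀ - uf j₀| := abs_add_le _ _
                _ = t + |uf i₀ - uf j₀| := by
                    rw [abs_mul, hsabs, abs_of_nonneg ht0]; ring
            nlinarith [hanonneg i₀ j₀, habs]
          · simp
          · simp
      _ = A + a₀ * t := by
          rw [show (∑ i, ∑ j, (a i j * |uf i - uf j|
              + (if i = i₀ then (if j = j₀ then a₀ * t else 0) else 0)))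
              = (∑ i, ∑ j, a i j * |uf i - uf j|)
                + ∑ i, ∑ j, (if i = i₀ then (if j = j₀ then a₀ * t else 0) else 0) by
            rw [← Finset.sum_add_distrib]
            exact Finset.sum_congr rfl fun i _ => Finset.sum_add_distrib]
          rw [hextra]
  rw [h1]
  nlinarith [h2, htM]
end

section
/- Let n ≥ 1, let B ⊆ Fin n, let a : Fin n → Fin n → ℝ be a measurement matrix, and let f : Fin n → ℝ. Then: (1) there exists u* : Fin n → ℝ with u*_i = f_i for all i ∈ B minimizing I(u) over all u with u_i = f_i on B; (2) there exists a dual feasible b* : Fin n → Fin n → ℝ such that I(u*) = ∑_{i ∈ B} (div b*)_i · f_i; and (3) for every u with u_i = f_i on B and every dual feasible b, one has ∑_{i ∈ B} (div b)_i · f_i ≤ I(u). (Strong duality with attainment for the Dirichlet least gradient problem.) -/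
/-!
Weak duality is the pointwise bound `b i j * (u j - u i) ≤ a i j / 2 * |u j - u i|`, summed after
the discrete integration by parts `div b ⬝ᵥ u = ∑ i j, b i j * (u j - u i)`.

For strong duality let `N w` be the least energy of an extension of the boundary values of `w`;
it is attained because clamping `u` to `[-M, M]`, with `M` bounding the data, does not increase
the energy. `N` is sublinear, so Hahn–Banach gives a linear functional `c ≤ N` with
`c ⬝ᵥ f = N f`, and `c` vanishes off `B` because `N` ignores interior values. Then
`c ⬝ᵥ u ≤ I u` for all `u`; as `I` is the support function of the compact convex set
`{div b | |b| ≤ a / 2}`, separation puts `c` in that set, i.e. `c = div b*`.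
-/

/-- Weighted ℓ¹ energy `I(u) = (1/2) ∑_{i,j} a_{ij} |u_i - u_j|`. -/
noncomputable def lgEnergy {n : ℕ} (a : Fin n → Fin n → ℝ) (u : Fin n → ℝ) : ℝ :=
  (1 / 2) * ∑ i, ∑ j, a i j * |u i - u j|

/-- Divergence of a matrix: `(div b)_i = ∑_j (b_{ji} - b_{ij})`. -/
noncomputable def dvg {n : ℕ} (b : Fin n → Fin n → ℝ) (i : Fin n) : ℝ :=
  ∑ j, (b j i - b i j)

open Finset Matrix

section Sublinear

variable {E : Type*} [AddCommGroup E] [Module ℝ E]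

theorem exists_linearMap_le_sublinear_eq (N : E → ℝ)
    (N_hom : ∀ c : ℝ, 0 < c → ∀ x, N (c • x) = c * N x) (N_add : ∀ x y, N (x + y) ≤ N x + N y)
    (x : E) : ∃ g : E →ₗ[ℝ] ℝ, (∀ y, g y ≤ N y) ∧ g x = N x := by
  have N_zero : N 0 = 0 := by
    have h := N_hom 2 two_pos 0
    rw [smul_zero] at h
    linarith
  let φ : E →ₗ.[ℝ] ℝ := LinearPMap.mkSpanSingleton' x (N x) fun c hc => by
    rcases smul_eq_zero.1 hc with rfl | rfl <;> simp [N_zero]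
  have hφ : ∀ y : φ.domain, φ y ≤ N y := by
    rintro ⟨_, hy⟩
    obtain ⟨c, rfl⟩ := Submodule.mem_span_singleton.1 hy
    rw [LinearPMap.mkSpanSingleton'_apply, RingHom.id_apply, smul_eq_mul]
    rcases lt_trichotomy c 0 with hc | rfl | hc
    · have h := N_add (c • x) ((-c) • x)
      rw [← add_smul, add_neg_cancel, zero_smul, N_zero, N_hom (-c) (neg_pos.2 hc)] at h
      linarith
    · simp [N_zero]
    · rw [N_hom c hc]
  obtain ⟨g, hgφ, hgN⟩ := exists_extension_of_le_sublinear φ N N_hom N_add hφ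
  exact ⟨g, hgN, (hgφ ⟨x, Submodule.mem_span_singleton_self x⟩).trans
    (LinearPMap.mkSpanSingleton'_apply_self _ _ _ _)⟩

end Sublinear

theorem exists_dotProduct_eq {R ι : Type*} [CommSemiring R] [Fintype ι] [DecidableEq ι]
    (g : Module.Dual R (ι → R)) : ∃ c : ι → R, ∀ u, c ⬝ᵥ u = g u :=
  ⟨(dotProductEquiv R ι).symm g, fun u => by
    rw [← dotProductEquiv_apply_apply, LinearEquiv.apply_symm_apply]⟩

variable {n : ℕ}

section Pairing

variable {a b : Fin n → Fin n → ℝ}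

theorem dvg_dotProduct (b : Fin n → Fin n → ℝ) (u : Fin n → ℝ) :
    dvg b ⬝ᵥ u = ∑ i, ∑ j, b i j * (u j - u i) := by
  simp only [dotProduct, dvg, sum_mul, sub_mul, mul_sub, sum_sub_distrib]
  rw [sum_comm (f := fun i j => b j i * u i)]

theorem lgEnergy_eq_sum (a : Fin n → Fin n → ℝ) (u : Fin n → ℝ) :
    lgEnergy a u = ∑ i, ∑ j, a i j / 2 * |u j - u i| := by
  simp only [lgEnergy, mul_sum]
  exact sum_congr rfl fun i _ => sum_congr rfl fun j _ => by rw [abs_sub_comm]; ring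

theorem dvg_dotProduct_le_lgEnergy (hb : ∀ i j, |b i j| ≤ a i j / 2) (u : Fin n → ℝ) :
    dvg b ⬝ᵥ u ≤ lgEnergy a u := by
  rw [dvg_dotProduct, lgEnergy_eq_sum]
  refine sum_le_sum fun i _ => sum_le_sum fun j _ => ?_
  calc b i j * (u j - u i) ≤ |b i j| * |u j - u i| := (le_abs_self _).trans (abs_mul _ _).le
    _ ≤ a i j / 2 * |u j - u i| := mul_le_mul_of_nonneg_right (hb i j) (abs_nonneg _)

theorem exists_dvg_dotProduct_eq_lgEnergy (ha : ∀ i j, 0 ≤ a i j) (u : Fin n → ℝ) :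
    ∃ b : Fin n → Fin n → ℝ, (∀ i j, |b i j| ≤ a i j / 2) ∧ dvg b ⬝ᵥ u = lgEnergy a u := by
  refine ⟨fun i j => a i j / 2 * SignType.sign (u j - u i), fun i j => ?_, ?_⟩
  · rw [abs_mul, abs_of_nonneg (by linarith [ha i j])]
    exact mul_le_of_le_one_right (by linarith [ha i j]) (by
      rcases lt_trichotomy (u j - u i) 0 with h | h | h <;> simp [h])
  · rw [dvg_dotProduct, lgEnergy_eq_sum]
    simp only [mul_assoc, sign_mul_self]

noncomputable def dvgLinearMap : (Fin n → Fin n → ℝ) →ₗ[ℝ] Fin n → ℝ where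
  toFun := dvg
  map_add' b c := by
    ext i
    simp only [dvg, Pi.add_apply, ← sum_add_distrib]
    exact sum_congr rfl fun _ _ => by ring
  map_smul' t b := by ext i; simp [dvg, mul_sum, mul_sub]

theorem exists_dvg_eq_of_dotProduct_le_lgEnergy (ha : ∀ i j, 0 ≤ a i j) (c : Fin n → ℝ)
    (hc : ∀ u, c ⬝ᵥ u ≤ lgEnergy a u) :
    ∃ b : Fin n → Fin n → ℝ, (∀ i j, |b i j| ≤ a i j / 2) ∧ dvg b = c := by
  have hbox : ∀ b, b ∈ Set.Icc (-(a / 2)) (a / 2) ↔ ∀ i j, |b i j| ≤ a i j / 2 := fun b => by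
    simp [abs_le, Pi.le_def, forall_and]
  by_contra! hne
  have hc_notMem : c ∉ dvgLinearMap '' Set.Icc (-(a / 2)) (a / 2) := by
    rintro ⟨b, hb, hbc⟩
    exact hne b ((hbox b).1 hb) hbc
  obtain ⟨ℓ, r, hℓ_lt, hlt_ℓ⟩ := geometric_hahn_banach_closed_point
    ((convex_Icc _ _).linear_image dvgLinearMap)
    (isCompact_Icc.image dvgLinearMap.continuous_of_finiteDimensional).isClosed hc_notMem
  obtain ⟨w, hw⟩ := exists_dotProduct_eq ℓ.toLinearMap
  obtain ⟨b, hb, hbw⟩ := exists_dvg_dotProduct_eq_lgEnergy ha w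
  have h_lt : ℓ (dvg b) < r := hℓ_lt _ ⟨b, (hbox b).2 hb, rfl⟩
  rw [← ContinuousLinearMap.coe_coe, ← hw, dotProduct_comm, hbw] at h_lt
  rw [← ContinuousLinearMap.coe_coe, ← hw, dotProduct_comm] at hlt_ℓ
  linarith [hc w]

end Pairing

section Dirichlet

variable {a : Fin n → Fin n → ℝ}

def dirichletClass (B : Finset (Fin n)) (f : Fin n → ℝ) : Set (Fin n → ℝ) :=
  {u | ∀ i ∈ B, u i = f i}

theorem isClosed_dirichletClass (B : Finset (Fin n)) (f : Fin n → ℝ) :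
    IsClosed (dirichletClass B f) := by
  simp only [dirichletClass, Set.ofPred_forall]
  exact isClosed_biInter fun i _ => isClosed_eq (continuous_apply i) continuous_const

theorem continuous_lgEnergy (a : Fin n → Fin n → ℝ) : Continuous (lgEnergy a) := by
  unfold lgEnergy
  fun_prop

theorem lgEnergy_nonneg (ha : ∀ i j, 0 ≤ a i j) (u : Fin n → ℝ) : 0 ≤ lgEnergy a u := by
  unfold lgEnergy
  exact mul_nonneg (by norm_num) (sum_nonneg fun i _ => sum_nonneg fun j _ =>
    mul_nonneg (ha i j) (abs_nonneg _))

theorem lgEnergy_add_le (ha : ∀ i j, 0 ≤ a i j) (u v : Fin n → ℝ) :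
    lgEnergy a (u + v) ≤ lgEnergy a u + lgEnergy a v := by
  simp only [lgEnergy, ← mul_add, ← sum_add_distrib]
  gcongr with i _ j _
  · exact ha i j
  · exact (abs_add_le _ _).trans_eq' (by simp only [Pi.add_apply]; ring_nf)

theorem lgEnergy_smul (a : Fin n → Fin n → ℝ) {t : ℝ} (ht : 0 ≤ t) (u : Fin n → ℝ) :
    lgEnergy a (t • u) = t * lgEnergy a u := by
  simp only [lgEnergy, mul_sum, Pi.smul_apply, smul_eq_mul, ← mul_sub, abs_mul, abs_of_nonneg ht]
  exact sum_congr rfl fun _ _ => sum_congr rfl fun _ _ => by ring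

theorem lgEnergy_comp_le (ha : ∀ i j, 0 ≤ a i j) {φ : ℝ → ℝ}
    (hφ : ∀ x y, |φ x - φ y| ≤ |x - y|) (u : Fin n → ℝ) :
    lgEnergy a (φ ∘ u) ≤ lgEnergy a u := by
  unfold lgEnergy
  gcongr 1 / 2 * ∑ i, ∑ j, ?_ with i _ j _
  exact mul_le_mul_of_nonneg_left (hφ _ _) (ha i j)

theorem exists_isMinOn_lgEnergy (ha : ∀ i j, 0 ≤ a i j) (B : Finset (Fin n)) (f : Fin n → ℝ) :
    ∃ u ∈ dirichletClass B f, IsMinOn (lgEnergy a) (dirichletClass B f) u := by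
  set M := ∑ i, |f i|
  have hM : ∀ i, |f i| ≤ M := fun i =>
    single_le_sum (f := fun i => |f i|) (fun i _ => abs_nonneg _) (mem_univ i)
  have hM₀ : -M ≤ M := neg_le_self (sum_nonneg fun i _ => abs_nonneg (f i))
  let clamp : ℝ → ℝ := fun x => Set.projIcc (-M) M hM₀ x
  have hclamp : ∀ v ∈ dirichletClass B f,
      clamp ∘ v ∈ dirichletClass B f ∩ Set.Icc (fun _ => -M) (fun _ => M) := fun v hv =>
    ⟨fun i hi => by simp [clamp, hv i hi, Set.projIcc_of_mem hM₀ (abs_le.1 (hM i))],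
      fun i => (Set.projIcc (-M) M hM₀ (v i)).2.1, fun i => (Set.projIcc (-M) M hM₀ (v i)).2.2⟩
  obtain ⟨u, hu, hmin⟩ := (isCompact_Icc.inter_left (isClosed_dirichletClass B f)).exists_isMinOn
    ⟨_, hclamp f fun _ _ => rfl⟩ (continuous_lgEnergy a).continuousOn
  exact ⟨u, hu.1, fun v hv =>
    (hmin (hclamp v hv)).trans (lgEnergy_comp_le ha (fun _ _ => Set.abs_projIcc_sub_projIcc hM₀) v)⟩

noncomputable def dirichletEnergy (a : Fin n → Fin n → ℝ) (B : Finset (Fin n)) (f : Fin n → ℝ) :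
    ℝ :=
  sInf (lgEnergy a '' dirichletClass B f)

theorem isLeast_dirichletEnergy (ha : ∀ i j, 0 ≤ a i j) (B : Finset (Fin n)) (f : Fin n → ℝ) :
    IsLeast (lgEnergy a '' dirichletClass B f) (dirichletEnergy a B f) := by
  obtain ⟨u, hu, hmin⟩ := exists_isMinOn_lgEnergy ha B f
  have h : IsLeast (lgEnergy a '' dirichletClass B f) (lgEnergy a u) :=
    ⟨⟨u, hu, rfl⟩, by rintro _ ⟨v, hv, rfl⟩; exact hmin hv⟩
  rwa [dirichletEnergy, h.csInf_eq]

variable {B : Finset (Fin n)}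

theorem dirichletEnergy_le (ha : ∀ i j, 0 ≤ a i j) {f u : Fin n → ℝ}
    (hu : u ∈ dirichletClass B f) : dirichletEnergy a B f ≤ lgEnergy a u :=
  (isLeast_dirichletEnergy ha B f).2 ⟨u, hu, rfl⟩

theorem dirichletEnergy_eq_zero (ha : ∀ i j, 0 ≤ a i j) {f : Fin n → ℝ}
    (hf : ∀ i ∈ B, f i = 0) : dirichletEnergy a B f = 0 := by
  obtain ⟨u, -, hu⟩ := (isLeast_dirichletEnergy ha B f).1
  refine le_antisymm ?_ (hu ▸ lgEnergy_nonneg ha u)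
  simpa [lgEnergy] using dirichletEnergy_le ha (u := 0) fun i hi => (hf i hi).symm

theorem dirichletEnergy_add_le (ha : ∀ i j, 0 ≤ a i j) (f g : Fin n → ℝ) :
    dirichletEnergy a B (f + g) ≤ dirichletEnergy a B f + dirichletEnergy a B g := by
  obtain ⟨u, hu, hu_eq⟩ := (isLeast_dirichletEnergy ha B f).1
  obtain ⟨v, hv, hv_eq⟩ := (isLeast_dirichletEnergy ha B g).1
  calc dirichletEnergy a B (f + g)
      ≤ lgEnergy a (u + v) := dirichletEnergy_le ha fun i hi => by simp [hu i hi, hv i hi]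
    _ ≤ lgEnergy a u + lgEnergy a v := lgEnergy_add_le ha u v
    _ = dirichletEnergy a B f + dirichletEnergy a B g := by rw [hu_eq, hv_eq]

theorem dirichletEnergy_smul (ha : ∀ i j, 0 ≤ a i j) {t : ℝ} (ht : 0 < t) (f : Fin n → ℝ) :
    dirichletEnergy a B (t • f) = t * dirichletEnergy a B f := by
  obtain ⟨u, hu, hu_eq⟩ := (isLeast_dirichletEnergy ha B f).1
  obtain ⟨v, hv, hv_eq⟩ := (isLeast_dirichletEnergy ha B (t • f)).1
  apply le_antisymm
  · calc dirichletEnergy a B (t • f)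
        ≤ lgEnergy a (t • u) := dirichletEnergy_le ha fun i hi => by simp [hu i hi]
      _ = t * dirichletEnergy a B f := by rw [lgEnergy_smul a ht.le, hu_eq]
  · calc t * dirichletEnergy a B f
        ≤ t * lgEnergy a (t⁻¹ • v) := by
          gcongr
          exact dirichletEnergy_le ha fun i hi => by simp [hv i hi, ht.ne']
      _ = dirichletEnergy a B (t • f) := by
          rw [lgEnergy_smul a (inv_nonneg.2 ht.le), ← mul_assoc, mul_inv_cancel₀ ht.ne', one_mul,
            hv_eq]

theorem linearMap_eq_zero_of_le_dirichletEnergy (ha : ∀ i j, 0 ≤ a i j)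
    {g : (Fin n → ℝ) →ₗ[ℝ] ℝ} (hg : ∀ u, g u ≤ dirichletEnergy a B u) {w : Fin n → ℝ}
    (hw : ∀ i ∈ B, w i = 0) : g w = 0 := by
  have h₁ := hg w
  have h₂ := hg (-w)
  rw [dirichletEnergy_eq_zero ha hw] at h₁
  rw [map_neg, dirichletEnergy_eq_zero ha fun i hi => by simp [hw i hi]] at h₂
  linarith

theorem sum_mul_eq_dotProduct {c f u : Fin n → ℝ} (hc : ∀ i ∉ B, c i = 0)
    (hu : u ∈ dirichletClass B f) : ∑ i ∈ B, c i * f i = c ⬝ᵥ u := by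
  rw [dotProduct, ← sum_subset (subset_univ B) fun i _ hi => by rw [hc i hi, zero_mul]]
  exact sum_congr rfl fun i hi => by rw [hu i hi]

theorem sum_dvg_mul_le_lgEnergy {b : Fin n → Fin n → ℝ} {f u : Fin n → ℝ}
    (hb : ∀ i j, |b i j| ≤ a i j / 2) (hdvg : ∀ i ∉ B, dvg b i = 0)
    (hu : u ∈ dirichletClass B f) : ∑ i ∈ B, dvg b i * f i ≤ lgEnergy a u :=
  (sum_mul_eq_dotProduct hdvg hu).trans_le (dvg_dotProduct_le_lgEnergy hb u)

end Dirichlet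

theorem dirichlet_strong_duality_general
    (n : ℕ) (B : Finset (Fin n))
    (a : Fin n → Fin n → ℝ)
    (hanonneg : ∀ i j, 0 ≤ a i j)
    (f : Fin n → ℝ) :
    ∃ ustar : Fin n → ℝ,
      (∀ i ∈ B, ustar i = f i) ∧
      (∀ u : Fin n → ℝ, (∀ i ∈ B, u i = f i) → lgEnergy a ustar ≤ lgEnergy a u) ∧
      (∃ bstar : Fin n → Fin n → ℝ,
        (∀ i j, |bstar i j| ≤ a i j / 2) ∧
        (∀ i, i ∉ B → dvg bstar i = 0) ∧
        lgEnergy a ustar = ∑ i ∈ B, dvg bstar i * f i) ∧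
      (∀ u : Fin n → ℝ, (∀ i ∈ B, u i = f i) →
        ∀ b : Fin n → Fin n → ℝ,
          (∀ i j, |b i j| ≤ a i j / 2) → (∀ i, i ∉ B → dvg b i = 0) →
          ∑ i ∈ B, dvg b i * f i ≤ lgEnergy a u) := by
  obtain ⟨⟨ustar, hustar, hustar_eq⟩, hmin⟩ := isLeast_dirichletEnergy hanonneg B f
  obtain ⟨g, hg_le, hg_f⟩ := exists_linearMap_le_sublinear_eq (dirichletEnergy a B)
    (fun _ ht => dirichletEnergy_smul hanonneg ht) (dirichletEnergy_add_le hanonneg) f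
  obtain ⟨c, hc⟩ := exists_dotProduct_eq g
  have hc_zero : ∀ i ∉ B, c i = 0 := fun i hi => by
    have h := linearMap_eq_zero_of_le_dirichletEnergy hanonneg hg_le (w := Pi.single i 1)
      fun j hj => Pi.single_eq_of_ne (ne_of_mem_of_not_mem hj hi) _
    rwa [← hc, dotProduct_single, mul_one] at h
  obtain ⟨bstar, hbstar, rfl⟩ := exists_dvg_eq_of_dotProduct_le_lgEnergy hanonneg c fun u =>
    (hc u).trans_le ((hg_le u).trans (dirichletEnergy_le hanonneg fun _ _ => rfl))
  refine ⟨ustar, hustar, fun u hu => hustar_eq ▸ hmin ⟨u, hu, rfl⟩, ⟨bstar, hbstar, hc_zero, ?_⟩,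
    fun u hu b hb hdvg => sum_dvg_mul_le_lgEnergy hb hdvg hu⟩
  rw [hustar_eq, sum_mul_eq_dotProduct hc_zero fun _ _ => rfl, hc, hg_f]

/-- Strong duality with attainment for the Dirichlet least gradient problem. -/
theorem dirichlet_strong_duality
    (n : ℕ) (hn : 1 ≤ n) (B : Finset (Fin n))
    (a : Fin n → Fin n → ℝ)
    (hasymm : ∀ i j, a i j = a j i) (hanonneg : ∀ i j, 0 ≤ a i j)
    (hadiag : ∀ i, a i i = 0)
    (f : Fin n → ℝ) :
    ∃ ustar : Fin n → ℝ,
      (∀ i ∈ B, ustar i = f i) ∧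
      (∀ u : Fin n → ℝ, (∀ i ∈ B, u i = f i) → lgEnergy a ustar ≤ lgEnergy a u) ∧
      (∃ bstar : Fin n → Fin n → ℝ,
        (∀ i j, |bstar i j| ≤ a i j / 2) ∧
        (∀ i, i ∉ B → dvg bstar i = 0) ∧
        lgEnergy a ustar = ∑ i ∈ B, dvg bstar i * f i) ∧
      (∀ u : Fin n → ℝ, (∀ i ∈ B, u i = f i) →
        ∀ b : Fin n → Fin n → ℝ,
          (∀ i j, |b i j| ≤ a i j / 2) → (∀ i, i ∉ B → dvg b i = 0) →
          ∑ i ∈ B, dvg b i * f i ≤ lgEnergy a u) :=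
  dirichlet_strong_duality_general n B a hanonneg f
end

section
/- Let n ≥ 1, let B ⊆ Fin n, let a : Fin n → Fin n → ℝ be a measurement matrix, and let f : Fin n → ℝ. Suppose u : Fin n → ℝ satisfies u_i = f_i for all i ∈ B, and suppose there exists a dual feasible b : Fin n → Fin n → ℝ such that |b_{ij}| = a_{ij}/2 for all i,j with u_i ≠ u_j, and b_{ij}·(u_i − u_j) ≤ 0 for all i,j. Then u minimizes I over all functions equal to f on B, i.e., I(u) ≤ I(w) for every w : Fin n → ℝ with w_i = f_i on B. (Converse direction of the Dirichlet duality theorem.) -/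
lemma dvg_pairing {n : ℕ} (b : Fin n → Fin n → ℝ) (v : Fin n → ℝ) :
    ∑ i, ∑ j, b i j * (v i - v j) = -∑ i, dvg b i * v i := by
  simp only [dvg, mul_sub, sub_mul, Finset.sum_sub_distrib, Finset.sum_mul, neg_sub]
  rw [Finset.sum_comm (f := fun i j => b i j * v j)]

/-- Converse direction of the Dirichlet duality theorem: complementary slackness with
a dual feasible `b` implies `u` is a minimizer of the least gradient problem. -/
theorem dirichlet_duality_converse
    (n : ℕ) (hn : 1 ≤ n) (B : Finset (Fin n))
    (a : Fin n → Fin n → ℝ)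
    (hasymm : ∀ i j, a i j = a j i) (hanonneg : ∀ i j, 0 ≤ a i j)
    (hadiag : ∀ i, a i i = 0)
    (f : Fin n → ℝ) (u : Fin n → ℝ)
    (huB : ∀ i ∈ B, u i = f i)
    (b : Fin n → Fin n → ℝ)
    (hb1 : ∀ i j, |b i j| ≤ a i j / 2)
    (hb2 : ∀ i, i ∉ B → dvg b i = 0)
    (hslack1 : ∀ i j, u i ≠ u j → |b i j| = a i j / 2)
    (hslack2 : ∀ i j, b i j * (u i - u j) ≤ 0) :
    ∀ w : Fin n → ℝ, (∀ i ∈ B, w i = f i) → lgEnergy a u ≤ lgEnergy a w := by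
  intro w hwB
  -- termwise identity for u
  have hterm : ∀ i j, b i j * (u i - u j) = -(a i j / 2 * |u i - u j|) := by
    intro i j
    by_cases h : u i = u j
    · simp [h]
    · have h1 := hslack1 i j h
      have h2 := hslack2 i j
      have habs : |b i j * (u i - u j)| = a i j / 2 * |u i - u j| := by
        rw [abs_mul, h1]
      rw [← habs, abs_of_nonpos h2, neg_neg]
  have hEu : lgEnergy a u = -∑ i, ∑ j, b i j * (u i - u j) := by
    unfold lgEnergy
    rw [← Finset.sum_neg_distrib]
    rw [Finset.mul_sum]
    refine Finset.sum_congr rfl fun i _ => ?_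
    rw [← Finset.sum_neg_distrib, Finset.mul_sum]
    refine Finset.sum_congr rfl fun j _ => ?_
    rw [hterm i j, neg_neg]
    ring
  -- pairing equality
  have hpair : ∑ i, ∑ j, b i j * (u i - u j) = ∑ i, ∑ j, b i j * (w i - w j) := by
    have h1 := dvg_pairing b u
    have h2 := dvg_pairing b w
    rw [h1, h2, neg_inj]
    refine Finset.sum_congr rfl fun i _ => ?_
    by_cases hi : i ∈ B
    · rw [huB i hi, hwB i hi]
    · rw [hb2 i hi]; ring
  rw [hEu, hpair]
  unfold lgEnergy
  rw [← Finset.sum_neg_distrib, Finset.mul_sum]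
  refine Finset.sum_le_sum fun i _ => ?_
  rw [← Finset.sum_neg_distrib, Finset.mul_sum]
  refine Finset.sum_le_sum fun j _ => ?_
  calc -(b i j * (w i - w j)) ≤ |b i j * (w i - w j)| := neg_le_abs _
    _ = |b i j| * |w i - w j| := abs_mul _ _
    _ ≤ a i j / 2 * |w i - w j| := by
        apply mul_le_mul_of_nonneg_right (hb1 i j) (abs_nonneg _)
    _ = 1 / 2 * (a i j * |w i - w j|) := by ring
end

section
/- Let n ≥ 1, let B ⊆ Fin n, let a : Fin n → Fin n → ℝ be a measurement matrix, and let f : Fin n → ℝ. If u and v both minimize I over { w : Fin n → ℝ : w_i = f_i for all i ∈ B }, then (u_i − u_j)·(v_i − v_j) ≥ 0 for all i, j with a_{ij} > 0. (Any two minimizers of the Dirichlet least gradient problem induce compatible directions along the edges.) -/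
/-- Any two minimizers of the Dirichlet least gradient problem induce compatible
directions along the edges. -/
theorem dirichlet_minimizers_compatible_directions
    (n : ℕ) (hn : 1 ≤ n) (B : Finset (Fin n))
    (a : Fin n → Fin n → ℝ)
    (hasymm : ∀ i j, a i j = a j i) (hanonneg : ∀ i j, 0 ≤ a i j)
    (hadiag : ∀ i, a i i = 0)
    (f : Fin n → ℝ) (u v : Fin n → ℝ)
    (huB : ∀ i ∈ B, u i = f i)
    (hvB : ∀ i ∈ B, v i = f i)
    (humin : ∀ w : Fin n → ℝ, (∀ i ∈ B, w i = f i) → lgEnergy a u ≤ lgEnergy a w)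
    (hvmin : ∀ w : Fin n → ℝ, (∀ i ∈ B, w i = f i) → lgEnergy a v ≤ lgEnergy a w) :
    ∀ i j, 0 < a i j → 0 ≤ (u i - u j) * (v i - v j) := by
  classical
  set w : Fin n → ℝ := fun k => (u k + v k) / 2 with hwdef
  have hwB : ∀ k ∈ B, w k = f k := by
    intro k hk
    simp only [hwdef, huB k hk, hvB k hk]
    ring
  have h1 : lgEnergy a u ≤ lgEnergy a w := humin w hwB
  have h2 : lgEnergy a v ≤ lgEnergy a w := hvmin w hwB
  have hterm : ∀ p q : Fin n,
      0 ≤ a p q * (|u p - u q| + |v p - v q| - |(u p - u q) + (v p - v q)|) := by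
    intro p q
    have h := abs_add_le (u p - u q) (v p - v q)
    exact mul_nonneg (hanonneg p q) (by linarith)
  have hsum : (∑ p, ∑ q, a p q * (|u p - u q| + |v p - v q| - |(u p - u q) + (v p - v q)|))
      = 2 * lgEnergy a u + 2 * lgEnergy a v - 4 * lgEnergy a w := by
    simp only [lgEnergy, hwdef, Finset.mul_sum, ← Finset.sum_add_distrib,
      ← Finset.sum_sub_distrib]
    apply Finset.sum_congr rfl
    intro p _
    apply Finset.sum_congr rfl
    intro q _
    have : (u p + v p) / 2 - (u q + v q) / 2 = ((u p - u q) + (v p - v q)) / 2 := by ring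
    rw [this, abs_div]
    simp [abs_of_nonneg]
    ring
  have hS0 : (∑ p, ∑ q, a p q * (|u p - u q| + |v p - v q| - |(u p - u q) + (v p - v q)|)) = 0 := by
    have hle : (∑ p, ∑ q, a p q * (|u p - u q| + |v p - v q| - |(u p - u q) + (v p - v q)|)) ≤ 0 := by
      rw [hsum]; linarith
    have hge : 0 ≤ (∑ p, ∑ q, a p q * (|u p - u q| + |v p - v q| - |(u p - u q) + (v p - v q)|)) :=
      Finset.sum_nonneg fun p _ => Finset.sum_nonneg fun q _ => hterm p q
    linarith
  intro i j haij
  have hinner : (∑ q, a i q * (|u i - u q| + |v i - v q| - |(u i - u q) + (v i - v q)|)) = 0 := by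
    have := (Finset.sum_eq_zero_iff_of_nonneg
      (fun p _ => Finset.sum_nonneg fun q _ => hterm p q)).mp hS0 i (Finset.mem_univ i)
    exact this
  have hij0 : a i j * (|u i - u j| + |v i - v j| - |(u i - u j) + (v i - v j)|) = 0 :=
    (Finset.sum_eq_zero_iff_of_nonneg (fun q _ => hterm i q)).mp hinner j (Finset.mem_univ j)
  have habs : |(u i - u j) + (v i - v j)| = |u i - u j| + |v i - v j| := by
    have := mul_eq_zero.mp hij0
    rcases this with h | h
    · exact absurd h (ne_of_gt haij)
    · linarith
  set x := u i - u j
  set y := v i - v j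
  nlinarith [sq_abs x, sq_abs y, sq_abs (x + y), abs_nonneg x, abs_nonneg y,
    mul_nonneg (abs_nonneg x) (abs_nonneg y)]
end

section
/- Let n ≥ 1, let B ⊆ Fin n, and let f : Fin n → ℝ. For k = 1, 2 let σ^k be a conductivity matrix and v^k : Fin n → ℝ satisfy v^k_i = f_i for all i ∈ B and the Kirchhoff equations ∑_j σ^k_{ij}·(v^k_i − v^k_j) = 0 for all i ∉ B, and define the induced currents J^k_{ij} := σ^k_{ij}·(v^k_i − v^k_j). If |J^1_{ij}| = |J^2_{ij}| for all i, j, then J^1 = J^2. (The current induced by a Dirichlet boundary voltage is uniquely determined by its magnitude.) -/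
/-- The current induced by a Dirichlet boundary voltage is uniquely determined by
its magnitude. -/
theorem dirichlet_current_unique_from_magnitude
    (n : ℕ) (hn : 1 ≤ n) (B : Finset (Fin n)) (f : Fin n → ℝ)
    (σ1 σ2 : Fin n → Fin n → ℝ)
    (hσ1symm : ∀ i j, σ1 i j = σ1 j i) (hσ1nonneg : ∀ i j, 0 ≤ σ1 i j)
    (hσ1diag : ∀ i, σ1 i i = 0)
    (hσ2symm : ∀ i j, σ2 i j = σ2 j i) (hσ2nonneg : ∀ i j, 0 ≤ σ2 i j)
    (hσ2diag : ∀ i, σ2 i i = 0)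
    (v1 v2 : Fin n → ℝ)
    (hv1B : ∀ i ∈ B, v1 i = f i) (hv2B : ∀ i ∈ B, v2 i = f i)
    (hK1 : ∀ i, i ∉ B → ∑ j, σ1 i j * (v1 i - v1 j) = 0)
    (hK2 : ∀ i, i ∉ B → ∑ j, σ2 i j * (v2 i - v2 j) = 0)
    (hmag : ∀ i j, |σ1 i j * (v1 i - v1 j)| = |σ2 i j * (v2 i - v2 j)|) :
    ∀ i j, σ1 i j * (v1 i - v1 j) = σ2 i j * (v2 i - v2 j) := by
  set D : Fin n → Fin n → ℝ :=
    fun i j => σ1 i j * (v1 i - v1 j) - σ2 i j * (v2 i - v2 j) with hDdef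
  set u : Fin n → ℝ := fun i => v1 i - v2 i with hu
  -- Kirchhoff / boundary: for each i, (∑ j, D i j) * u i = 0
  have hinner : ∀ i, (∑ j, D i j) * u i = 0 := by
    intro i
    by_cases hiB : i ∈ B
    · have : u i = 0 := by simp [hu, hv1B i hiB, hv2B i hiB]
      rw [this, mul_zero]
    · have : ∑ j, D i j = 0 := by
        simp only [hDdef, Finset.sum_sub_distrib, hK1 i hiB, hK2 i hiB, sub_zero]
      rw [this, zero_mul]
  -- antisymmetry of D
  have hanti : ∀ i j, D i j = -(D j i) := by
    intro i j
    simp only [hDdef]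
    rw [hσ1symm i j, hσ2symm i j]
    ring
  -- the total "dissipation" sum vanishes
  have hsum : ∑ i, ∑ j, D i j * (u i - u j) = 0 := by
    have step : ∀ i : Fin n, ∑ j, D i j * (u i - u j)
        = (∑ j, D i j) * u i - ∑ j, D i j * u j := by
      intro i
      rw [Finset.sum_mul, ← Finset.sum_sub_distrib]
      exact Finset.sum_congr rfl fun j _ => by ring
    rw [Finset.sum_congr rfl fun i _ => step i, Finset.sum_sub_distrib,
      Finset.sum_comm (f := fun i j => D i j * u j)]
    have h2 : ∑ j, ∑ i, D i j * u j = 0 := by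
      refine Finset.sum_eq_zero fun j _ => ?_
      rw [← Finset.sum_mul]
      have : ∑ i, D i j = -(∑ i, D j i) := by
        rw [← Finset.sum_neg_distrib]
        exact Finset.sum_congr rfl fun i _ => hanti i j
      rw [this, neg_mul, hinner j, neg_zero]
    rw [h2]
    simp [hinner]
  -- each term is nonnegative
  have hpt : ∀ i j, 0 ≤ D i j * (u i - u j) := by
    intro i j
    have h0 : u i - u j = (v1 i - v1 j) - (v2 i - v2 j) := by simp [hu]; ring
    rcases abs_eq_abs.mp (hmag i j) with h | h
    · have : D i j = 0 := by simp [hDdef, h]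
      rw [this, zero_mul]
    · have h1 := mul_nonneg (hσ1nonneg i j) (sq_nonneg (v1 i - v1 j))
      have h2 := mul_nonneg (hσ2nonneg i j) (sq_nonneg (v2 i - v2 j))
      have key : (σ1 i j * (v1 i - v1 j) - σ2 i j * (v2 i - v2 j))
          * ((v1 i - v1 j) - (v2 i - v2 j))
          = 2 * (σ1 i j * (v1 i - v1 j) ^ 2) + 2 * (σ2 i j * (v2 i - v2 j) ^ 2) := by
        linear_combination (-(v1 i - v1 j) - (v2 i - v2 j)) * h
      simp only [hDdef, h0]
      rw [key]
      linarith
  -- hence each term is zero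
  have hzero : ∀ i j, D i j * (u i - u j) = 0 := by
    have houter := (Finset.sum_eq_zero_iff_of_nonneg
      (fun i _ => Finset.sum_nonneg fun j _ => hpt i j)).mp hsum
    intro i j
    have := houter i (Finset.mem_univ i)
    exact (Finset.sum_eq_zero_iff_of_nonneg (fun j _ => hpt i j)).mp this j
      (Finset.mem_univ j)
  -- conclude
  intro i j
  rcases abs_eq_abs.mp (hmag i j) with h | h
  · exact h
  · have ht := hzero i j
    have h0 : u i - u j = (v1 i - v1 j) - (v2 i - v2 j) := by simp [hu]; ring
    simp only [hDdef, h0] at ht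
    have h1 := mul_nonneg (hσ1nonneg i j) (sq_nonneg (v1 i - v1 j))
    have h2 := mul_nonneg (hσ2nonneg i j) (sq_nonneg (v2 i - v2 j))
    have key : (σ1 i j * (v1 i - v1 j) - σ2 i j * (v2 i - v2 j))
        * ((v1 i - v1 j) - (v2 i - v2 j))
        = 2 * (σ1 i j * (v1 i - v1 j) ^ 2) + 2 * (σ2 i j * (v2 i - v2 j) ^ 2) := by
      linear_combination (-(v1 i - v1 j) - (v2 i - v2 j)) * h
    rw [key] at ht
    have hx2 : σ1 i j * (v1 i - v1 j) ^ 2 = 0 := by linarith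
    have hsq : (σ1 i j * (v1 i - v1 j)) ^ 2 = 0 := by
      have : (σ1 i j * (v1 i - v1 j)) ^ 2 = σ1 i j * (σ1 i j * (v1 i - v1 j) ^ 2) := by
        ring
      rw [this, hx2, mul_zero]
    have hax : σ1 i j * (v1 i - v1 j) = 0 := by
      exact pow_eq_zero_iff (n := 2) (by norm_num) |>.mp hsq
    rw [hax] at h ⊢
    linarith [h]
end

section
/- Let n ≥ 1, let B ⊆ Fin n, let a : Fin n → Fin n → ℝ be a measurement matrix, and let g : Fin n → ℝ be nonzero with g_i = 0 for all i ∉ B and ∑_i g_i = 0. If u and v both minimize I over M_g := { w : Fin n → ℝ : ∑_i g_i·w_i = 1 }, then (u_i − u_j)·(v_i − v_j) ≥ 0 for all i, j with a_{ij} > 0. (Any two minimizers of the Neumann least gradient problem induce compatible directions along the edges.) -/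
private lemma sum_half_split {α : Type*} (s : Finset α) (f h : α → ℝ) :
    ∑ i ∈ s, (f i + h i) / 2 = ((∑ i ∈ s, f i) + ∑ i ∈ s, h i) / 2 := by
  rw [← Finset.sum_div, Finset.sum_add_distrib]

/-- Any two minimizers of the Neumann least gradient problem induce compatible
directions along the edges. -/
theorem neumann_minimizers_compatible_directions
    (n : ℕ) (hn : 1 ≤ n) (B : Finset (Fin n))
    (a : Fin n → Fin n → ℝ)
    (hasymm : ∀ i j, a i j = a j i) (hanonneg : ∀ i j, 0 ≤ a i j)
    (hadiag : ∀ i, a i i = 0)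
    (g : Fin n → ℝ) (hgne : g ≠ 0) (hgB : ∀ i, i ∉ B → g i = 0)
    (hgsum : ∑ i, g i = 0)
    (u v : Fin n → ℝ)
    (huM : ∑ i, g i * u i = 1) (hvM : ∑ i, g i * v i = 1)
    (humin : ∀ w : Fin n → ℝ, ∑ i, g i * w i = 1 → lgEnergy a u ≤ lgEnergy a w)
    (hvmin : ∀ w : Fin n → ℝ, ∑ i, g i * w i = 1 → lgEnergy a v ≤ lgEnergy a w) :
    ∀ i j, 0 < a i j → 0 ≤ (u i - u j) * (v i - v j) := by
  set w : Fin n → ℝ := fun i => (u i + v i) / 2 with hwdef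
  have hwM : ∑ i, g i * w i = 1 := by
    have h1 : ∑ i, g i * w i = ∑ i, (g i * u i + g i * v i) / 2 :=
      Finset.sum_congr rfl fun i _ => by simp only [hwdef]; ring
    rw [h1, sum_half_split, huM, hvM]; norm_num
  have huv : lgEnergy a u = lgEnergy a v := le_antisymm (humin v hvM) (hvmin u huM)
  have hE : ∀ z : Fin n → ℝ,
      lgEnergy a z = (1/2) * ∑ p : Fin n × Fin n, a p.1 p.2 * |z p.1 - z p.2| := by
    intro z; rw [lgEnergy, Fintype.sum_prod_type]
  have hterm : ∀ p : Fin n × Fin n,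
      a p.1 p.2 * |w p.1 - w p.2| ≤
        (a p.1 p.2 * |u p.1 - u p.2| + a p.1 p.2 * |v p.1 - v p.2|) / 2 := by
    rintro ⟨i, j⟩
    have h1 : w i - w j = ((u i - u j) + (v i - v j)) / 2 := by simp only [hwdef]; ring
    have h2 : |w i - w j| ≤ (|u i - u j| + |v i - v j|) / 2 := by
      rw [h1, abs_div, abs_of_pos (by norm_num : (0:ℝ) < 2)]
      have := abs_add_le (u i - u j) (v i - v j)
      linarith
    have h3 := mul_le_mul_of_nonneg_left h2 (hanonneg i j)
    calc a i j * |w i - w j| ≤ a i j * ((|u i - u j| + |v i - v j|) / 2) := h3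
      _ = (a i j * |u i - u j| + a i j * |v i - v j|) / 2 := by ring
  set Su := ∑ p : Fin n × Fin n, a p.1 p.2 * |u p.1 - u p.2| with hSu
  set Sv := ∑ p : Fin n × Fin n, a p.1 p.2 * |v p.1 - v p.2| with hSv
  set Sw := ∑ p : Fin n × Fin n, a p.1 p.2 * |w p.1 - w p.2| with hSw
  have hupper : ∑ p : Fin n × Fin n,
      (a p.1 p.2 * |u p.1 - u p.2| + a p.1 p.2 * |v p.1 - v p.2|) / 2 = (Su + Sv) / 2 :=
    sum_half_split _ _ _
  have hsumle : Sw ≤ (Su + Sv) / 2 := by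
    rw [← hupper]
    exact Finset.sum_le_sum fun p _ => hterm p
  have hwge : lgEnergy a u ≤ lgEnergy a w := humin w hwM
  have hSweq : Sw = (Su + Sv) / 2 := by
    have e1 := hE u; have e2 := hE v; have e3 := hE w
    rw [← hSu] at e1; rw [← hSv] at e2; rw [← hSw] at e3
    have : Su = Sv := by rw [e1, e2] at huv; linarith
    rw [e1, e3] at hwge
    linarith
  have hsumeq : Sw = ∑ p : Fin n × Fin n,
      (a p.1 p.2 * |u p.1 - u p.2| + a p.1 p.2 * |v p.1 - v p.2|) / 2 := by
    rw [hupper]; exact hSweq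
  have htermeq := (Finset.sum_eq_sum_iff_of_le
      (fun p (_ : p ∈ Finset.univ) => hterm p)).mp hsumeq
  intro i j hij
  have hthis := htermeq (i, j) (Finset.mem_univ _)
  simp only at hthis
  have habs : |w i - w j| = (|u i - u j| + |v i - v j|) / 2 := by
    have h2 : a i j * |w i - w j| = a i j * ((|u i - u j| + |v i - v j|) / 2) := by
      rw [hthis]; ring
    exact mul_left_cancel₀ (ne_of_gt hij) h2
  set x := u i - u j
  set y := v i - v j
  have hx : |x + y| = |x| + |y| := by
    have h1 : w i - w j = (x + y) / 2 := by simp only [hwdef, x, y]; ring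
    rw [h1, abs_div, abs_of_pos (by norm_num : (0:ℝ) < 2)] at habs
    linarith
  have hsq : (x + y) ^ 2 = (|x| + |y|) ^ 2 := by rw [← sq_abs (x + y), hx]
  nlinarith [sq_abs x, sq_abs y, abs_nonneg (x * y), abs_mul x y]
end
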